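/- arXiv:2410.11819 — 3 statements merged into one kernel-verified Lean document; each statement's English description precedes it below -/
import Mathlib

section
/- For a tridiagonal Toeplitz matrix M of size λ×λ with diagonal entries ω+κ, subdiagonal entries -ω, and superdiagonal entries -κ (where ω,κ > 0 and M is invertible), the ratio of the (λ,1) entry to the (1,λ) entry of M⁻¹ equals (ω/κ)^(λ-1). -/
/-! By the cofactor formula, `M⁻¹ = (det M)⁻¹ • adj M`. The cofactor at `(λ, 1)` is, up to the sign
`(-1)^(λ-1)`, the determinant of `M` with its first row and last column deleted; this minor is
triangular with the subdiagonal `-ω` of `M` on its diagonal, so `adj M (λ, 1) = ω^(λ-1)`.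
Transposing swaps `ω` and `κ`, giving `adj M (1, λ) = κ^(λ-1)`, and the factor `(det M)⁻¹` cancels
in the ratio. -/

open Matrix

/-- Tridiagonal Toeplitz matrix with diagonal ω+κ, subdiagonal -ω, superdiagonal -κ. -/
def tridiag (lam : ℕ) (ω κ : ℝ) : Matrix (Fin lam) (Fin lam) ℝ :=
  Matrix.of fun i j =>
    if i = j then ω + κ
    else if (i : ℕ) = (j : ℕ) + 1 then -ω
    else if (j : ℕ) = (i : ℕ) + 1 then -κ
    else 0

theorem Matrix.adjugate_last_zero_of_upperHessenberg {R : Type*} [CommRing R] {n : ℕ}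
    (A : Matrix (Fin (n + 1)) (Fin (n + 1)) R)
    (hA : ∀ i j : Fin (n + 1), (j : ℕ) + 1 < i → A i j = 0) :
    A.adjugate (Fin.last n) 0 = (-1) ^ n * ∏ k : Fin n, A k.succ k.castSucc := by
  have hminor : (A.submatrix Fin.succ (Fin.last n).succAbove).IsUpperTriangular := by
    intro i j hji
    simp only [submatrix_apply, Fin.succAbove_last]
    exact hA _ _ (by simp only [Fin.val_succ, Fin.val_castSucc]; simp only [id] at hji; omega)
  rw [adjugate_fin_succ_eq_det_submatrix, Fin.succAbove_zero, det_of_isUpperTriangular hminor]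
  simp [Fin.succAbove_last]

theorem tridiag_transpose (lam : ℕ) (ω κ : ℝ) : (tridiag lam ω κ)ᵀ = tridiag lam κ ω := by
  ext i j
  simp only [tridiag, transpose_apply, of_apply]
  split_ifs <;> first | ring1 | (exfalso; simp only [Fin.ext_iff] at *; omega)

theorem tridiag_adjugate_last_zero (n : ℕ) (ω κ : ℝ) :
    (tridiag (n + 1) ω κ).adjugate (Fin.last n) 0 = ω ^ n := by
  rw [adjugate_last_zero_of_upperHessenberg]
  · have hsub : ∀ k : Fin n, tridiag (n + 1) ω κ k.succ k.castSucc = -ω := fun k => by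
      simp [tridiag, Fin.ext_iff]
    rw [Finset.prod_congr rfl fun k _ => hsub k, Finset.prod_const, Finset.card_univ,
      Fintype.card_fin, ← mul_pow, neg_one_mul, neg_neg]
  · intro i j hij
    simp only [tridiag, of_apply]
    rw [if_neg (by rw [Fin.ext_iff]; omega), if_neg (by omega), if_neg (by omega)]

theorem tridiag_adjugate_zero_last (n : ℕ) (ω κ : ℝ) :
    (tridiag (n + 1) ω κ).adjugate 0 (Fin.last n) = κ ^ n := by
  rw [← tridiag_adjugate_last_zero n κ ω, ← tridiag_transpose, ← adjugate_transpose,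
    transpose_apply]

theorem stmt_0 (lam : ℕ) (hlam : 2 ≤ lam) (ω κ : ℝ)
    (hM : IsUnit (tridiag lam ω κ).det) :
    (tridiag lam ω κ)⁻¹ ⟨lam - 1, by omega⟩ ⟨0, by omega⟩ /
      (tridiag lam ω κ)⁻¹ ⟨0, by omega⟩ ⟨lam - 1, by omega⟩ = (ω / κ) ^ (lam - 1) := by
  obtain ⟨n, rfl⟩ : ∃ n, lam = n + 1 := ⟨lam - 1, by omega⟩
  change (tridiag (n + 1) ω κ)⁻¹ (Fin.last n) 0 / (tridiag (n + 1) ω κ)⁻¹ 0 (Fin.last n) =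
    (ω / κ) ^ n
  rw [inv_def, Matrix.smul_apply, Matrix.smul_apply, tridiag_adjugate_last_zero,
    tridiag_adjugate_zero_last, smul_eq_mul, smul_eq_mul, Ring.inverse_eq_inv',
    mul_div_mul_left _ _ (inv_ne_zero hM.ne_zero), div_pow]
end

section
/- Telescoping decomposition of unconditional path entropy estimators: for a stationary (shift-invariant) probability distribution on sequences of k+1 states, the expectation of log(P(γ)/P(θγ)) decomposes as the sum over orders l = 1,...,k of the expectations of log(P(γ^{(l+1)}|γ^{(1:l)}) / P(γ^{(1)}|γ^{(l+1:2)})), where θ reverses the sequence. -/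
open Finset

variable {E : Type*}

/-- Marginal of a distribution `P` on sequences of length `k+1` over the window
of `m` consecutive coordinates starting at position `j` (indices taken mod
`k+1`; for `j + m ≤ k+1` this is the ordinary window marginal). -/
def window [Fintype E] [DecidableEq E] (k : ℕ) (P : (Fin (k + 1) → E) → ℝ)
    (j m : ℕ) : (Fin m → E) → ℝ :=
  fun δ => ∑ γ : Fin (k + 1) → E,
    if (∀ i : Fin m, γ ⟨(j + (i : ℕ)) % (k + 1), Nat.mod_lt _ (Nat.succ_pos k)⟩ = δ i)
      then P γ else 0

/-- Reversal of a finite sequence. -/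
def seqRev (m : ℕ) (δ : Fin m → E) : Fin m → E := fun i => δ i.rev

/-- The first `m` coordinates of a sequence of length `m+1`. -/
def seqInit (m : ℕ) (δ : Fin (m + 1) → E) : Fin m → E := fun i => δ i.castSucc

/-- Restriction of a full path to the window of `m` coordinates starting at `j`. -/
def res (k j m : ℕ) (γ : Fin (k + 1) → E) : Fin m → E :=
  fun i => γ ⟨(j + (i : ℕ)) % (k + 1), Nat.mod_lt _ (Nat.succ_pos k)⟩

section Aux

variable [Fintype E] [DecidableEq E] {k : ℕ} {P : (Fin (k + 1) → E) → ℝ}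

lemma window_apply (j m : ℕ) (δ : Fin m → E) :
    window k P j m δ = ∑ γ : Fin (k + 1) → E, if res k j m γ = δ then P γ else 0 := by
  unfold window
  refine Finset.sum_congr rfl fun γ _ => ?_
  simp [res, funext_iff]

lemma sum_window_mul (j m : ℕ) (h : j + m ≤ k + 1)
    (hshift : ∀ j m : ℕ, j + m ≤ k + 1 → window k P j m = window k P 0 m)
    (f : (Fin m → E) → ℝ) :
    ∑ δ : Fin m → E, window k P 0 m δ * f δ
      = ∑ γ : Fin (k + 1) → E, P γ * f (res k j m γ) := by
  rw [← hshift j m h]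
  simp only [window_apply, Finset.sum_mul, ite_mul, zero_mul]
  rw [Finset.sum_comm]
  refine Finset.sum_congr rfl fun γ _ => ?_
  rw [Finset.sum_ite_eq]
  simp

lemma window_pos (hpos : ∀ γ, 0 < P γ) (e : E) (m : ℕ) (hm : m ≤ k + 1)
    (δ : Fin m → E) : 0 < window k P 0 m δ := by
  rw [window_apply]
  refine Finset.sum_pos' (fun γ _ => ?_)
    ⟨fun i : Fin (k + 1) => if h : (i : ℕ) < m then δ ⟨i, h⟩ else e, Finset.mem_univ _, ?_⟩
  · split_ifs
    · exact (hpos γ).le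
    · exact le_refl 0
  · rw [if_pos]
    · exact hpos _
    · funext i
      have hi : (i : ℕ) % (k + 1) = (i : ℕ) := Nat.mod_eq_of_lt (lt_of_lt_of_le i.isLt hm)
      simp [res, hi, i.isLt]

lemma res_id (γ : Fin (k + 1) → E) : res k 0 (k + 1) γ = γ := by
  funext i
  simp [res, Nat.mod_eq_of_lt i.isLt]

lemma window_top (γ : Fin (k + 1) → E) : window k P 0 (k + 1) γ = P γ := by
  rw [window_apply]
  simp only [res_id]
  rw [Finset.sum_ite_eq' Finset.univ γ P]
  simp

lemma res_init (j m : ℕ) (γ : Fin (k + 1) → E) :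
    seqInit m (res k j (m + 1) γ) = res k j m γ := by
  funext i
  simp only [seqInit, res]
  congr 1

lemma res_rev_init (j m : ℕ) (γ : Fin (k + 1) → E) :
    seqInit m (seqRev (m + 1) (res k j (m + 1) γ)) = seqRev m (res k (j + 1) m γ) := by
  funext i
  simp only [seqInit, seqRev, res]
  congr 1
  apply Fin.ext
  simp only [Fin.val_rev, Fin.coe_castSucc]
  congr 1
  have := i.isLt
  omega

/-- The telescoping summand of order `m`. -/
noncomputable def Afun [Fintype E] [DecidableEq E] (k : ℕ) (P : (Fin (k + 1) → E) → ℝ) (m : ℕ) : ℝ :=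
  ∑ γ : Fin (k + 1) → E, P γ *
    (Real.log (window k P 0 (m + 1) (res k 0 (m + 1) γ)) -
      Real.log (window k P 0 (m + 1) (seqRev (m + 1) (res k 0 (m + 1) γ))))

end Aux

/-- Telescoping decomposition of the unconditional path-entropy estimator:
for a shift-invariant fully supported distribution `P` on `E^{k+1}`, the
expectation of log(P(γ)/P(θγ)) is the sum over orders l = 1,…,k of the
conditional (splitting-probability) estimators. -/
theorem stmt_13 [Fintype E] [DecidableEq E] (k : ℕ) (hk : 1 ≤ k)
    (P : (Fin (k + 1) → E) → ℝ)
    (hpos : ∀ γ, 0 < P γ) (hsum : ∑ γ, P γ = 1)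
    (hshift : ∀ j m : ℕ, j + m ≤ k + 1 → window k P j m = window k P 0 m) :
    ∑ γ : Fin (k + 1) → E, P γ * Real.log (P γ / P (seqRev (k + 1) γ)) =
      ∑ l ∈ Finset.range k,
        ∑ δ : Fin (l + 1 + 1) → E,
          window k P 0 (l + 1 + 1) δ *
            Real.log
              ((window k P 0 (l + 1 + 1) δ / window k P 0 (l + 1) (seqInit (l + 1) δ)) /
                (window k P 0 (l + 1 + 1) (seqRev (l + 1 + 1) δ) /
                  window k P 0 (l + 1) (seqInit (l + 1) (seqRev (l + 1 + 1) δ)))) := by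
  classical
  have hE : Nonempty E := by
    by_contra h
    haveI : IsEmpty (Fin (k + 1) → E) := ⟨fun γ => h ⟨γ 0⟩⟩
    rw [Finset.univ_eq_empty, Finset.sum_empty] at hsum
    exact one_ne_zero hsum.symm
  obtain ⟨e⟩ := hE
  have key : ∀ l ∈ Finset.range k,
      (∑ δ : Fin (l + 1 + 1) → E,
        window k P 0 (l + 1 + 1) δ *
          Real.log
            ((window k P 0 (l + 1 + 1) δ / window k P 0 (l + 1) (seqInit (l + 1) δ)) /
              (window k P 0 (l + 1 + 1) (seqRev (l + 1 + 1) δ) /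
                window k P 0 (l + 1) (seqInit (l + 1) (seqRev (l + 1 + 1) δ)))))
        = Afun k P (l + 1) - Afun k P l := by
    intro l hl
    rw [Finset.mem_range] at hl
    have h2 : 0 + (l + 1 + 1) ≤ k + 1 := by omega
    have h1 : 1 + (l + 1) ≤ k + 1 := by omega
    have h0 : 0 + (l + 1) ≤ k + 1 := by omega
    have step1 : ∀ δ : Fin (l + 1 + 1) → E,
        window k P 0 (l + 1 + 1) δ *
          Real.log
            ((window k P 0 (l + 1 + 1) δ / window k P 0 (l + 1) (seqInit (l + 1) δ)) /
              (window k P 0 (l + 1 + 1) (seqRev (l + 1 + 1) δ) /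
                window k P 0 (l + 1) (seqInit (l + 1) (seqRev (l + 1 + 1) δ))))
        = window k P 0 (l + 1 + 1) δ *
            (Real.log (window k P 0 (l + 1 + 1) δ)
              - Real.log (window k P 0 (l + 1 + 1) (seqRev (l + 1 + 1) δ)))
          - window k P 0 (l + 1 + 1) δ *
            (Real.log (window k P 0 (l + 1) (seqInit (l + 1) δ))
              - Real.log (window k P 0 (l + 1) (seqInit (l + 1) (seqRev (l + 1 + 1) δ)))) := by
      intro δ
      have pa := window_pos hpos e (l + 1 + 1) (by omega) δ
      have pb := window_pos hpos e (l + 1) (by omega) (seqInit (l + 1) δ)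
      have pc := window_pos hpos e (l + 1 + 1) (by omega) (seqRev (l + 1 + 1) δ)
      have pd := window_pos hpos e (l + 1) (by omega) (seqInit (l + 1) (seqRev (l + 1 + 1) δ))
      rw [Real.log_div (div_pos pa pb).ne' (div_pos pc pd).ne',
        Real.log_div pa.ne' pb.ne', Real.log_div pc.ne' pd.ne']
      ring
    rw [Finset.sum_congr rfl fun δ _ => step1 δ, Finset.sum_sub_distrib]
    simp only [sum_window_mul 0 (l + 1 + 1) h2 hshift]
    have hS1 : (∑ γ : Fin (k + 1) → E, P γ *
        (Real.log (window k P 0 (l + 1 + 1) (res k 0 (l + 1 + 1) γ))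
          - Real.log (window k P 0 (l + 1 + 1) (seqRev (l + 1 + 1) (res k 0 (l + 1 + 1) γ)))))
        = Afun k P (l + 1) := rfl
    have hS2 : (∑ γ : Fin (k + 1) → E, P γ *
        (Real.log (window k P 0 (l + 1) (seqInit (l + 1) (res k 0 (l + 1 + 1) γ)))
          - Real.log (window k P 0 (l + 1)
              (seqInit (l + 1) (seqRev (l + 1 + 1) (res k 0 (l + 1 + 1) γ))))))
        = Afun k P l := by
      simp only [res_init, res_rev_init, zero_add]
      simp only [mul_sub, Finset.sum_sub_distrib]
      rw [← sum_window_mul 1 (l + 1) h1 hshift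
            (fun δ => Real.log (window k P 0 (l + 1) (seqRev (l + 1) δ))),
          sum_window_mul 0 (l + 1) h0 hshift
            (fun δ => Real.log (window k P 0 (l + 1) (seqRev (l + 1) δ)))]
      unfold Afun
      simp only [mul_sub, Finset.sum_sub_distrib]
    rw [hS1, hS2]
  rw [Finset.sum_congr rfl key, Finset.sum_range_sub (Afun k P) k]
  have hA0 : Afun k P 0 = 0 := by
    unfold Afun
    refine Finset.sum_eq_zero fun γ _ => ?_
    have hr : seqRev 1 (res k 0 1 γ) = res k 0 1 γ := by
      funext i
      simp [seqRev, Subsingleton.elim i.rev i]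
    rw [hr, sub_self, mul_zero]
  have hAk : Afun k P k = ∑ γ : Fin (k + 1) → E, P γ * Real.log (P γ / P (seqRev (k + 1) γ)) := by
    unfold Afun
    refine Finset.sum_congr rfl fun γ _ => ?_
    rw [res_id γ, window_top, window_top, Real.log_div (hpos γ).ne' (hpos _).ne']
  rw [hA0, hAk, sub_zero]
end

section
/- Nonnegativity of the k-th order conditional entropy estimator: for a shift-invariant fully-supported distribution P on E^{k+1}, the quantity ∑_γ P(γ)·log(P(γ^{(k+1)}|γ^{(1:k)}) / P(γ^{(1)}|γ^{(k+1:2)})) is nonnegative. -/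
open Finset

variable {E : Type*}

/-- The log-sum inequality. -/
private lemma logSumIneq {ι : Type*} [Fintype ι] [Nonempty ι] (p q : ι → ℝ)
    (hp : ∀ i, 0 < p i) (hq : ∀ i, 0 < q i) :
    (∑ i, p i) * Real.log ((∑ i, p i) / (∑ i, q i)) ≤ ∑ i, p i * Real.log (p i / q i) := by
  have hSp : 0 < ∑ i, p i := Finset.sum_pos (fun i _ => hp i) Finset.univ_nonempty
  have hSq : 0 < ∑ i, q i := Finset.sum_pos (fun i _ => hq i) Finset.univ_nonempty
  set Sp := ∑ i, p i
  set Sq := ∑ i, q i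
  have key : ∀ i : ι, p i * Real.log (Sp / Sq)
      ≤ p i * Real.log (p i / q i) - (p i - q i * (Sp / Sq)) := by
    intro i
    have hn1 : (0:ℝ) < q i * Sp := mul_pos (hq i) hSp
    have hn2 : (0:ℝ) < p i * Sq := mul_pos (hp i) hSq
    have h1 : Real.log ((q i * Sp) / (p i * Sq)) ≤ (q i * Sp) / (p i * Sq) - 1 :=
      Real.log_le_sub_one_of_pos (div_pos hn1 hn2)
    have h2 : Real.log ((q i * Sp) / (p i * Sq))
        = Real.log (Sp / Sq) - Real.log (p i / q i) := by
      rw [Real.log_div hn1.ne' hn2.ne',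
        Real.log_mul (ne_of_gt (hq i)) (ne_of_gt hSp),
        Real.log_mul (ne_of_gt (hp i)) (ne_of_gt hSq),
        Real.log_div (ne_of_gt hSp) (ne_of_gt hSq),
        Real.log_div (ne_of_gt (hp i)) (ne_of_gt (hq i))]
      ring
    rw [h2] at h1
    have h3 := mul_le_mul_of_nonneg_left h1 (le_of_lt (hp i))
    have h4 : p i * ((q i * Sp) / (p i * Sq) - 1) = q i * (Sp / Sq) - p i := by
      have hpne : p i ≠ 0 := (hp i).ne'
      have hqne : Sq ≠ 0 := hSq.ne'
      field_simp
    rw [h4] at h3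
    linarith
  calc Sp * Real.log (Sp / Sq) = ∑ i, p i * Real.log (Sp / Sq) := by rw [← Finset.sum_mul]
    _ ≤ ∑ i, (p i * Real.log (p i / q i) - (p i - q i * (Sp / Sq))) :=
        Finset.sum_le_sum fun i _ => key i
    _ = (∑ i, p i * Real.log (p i / q i)) - (Sp - Sq * (Sp / Sq)) := by
        rw [Finset.sum_sub_distrib, Finset.sum_sub_distrib, ← Finset.sum_mul]
    _ = ∑ i, p i * Real.log (p i / q i) := by
        have : Sq * (Sp / Sq) = Sp := by field_simp
        rw [this]; ring

/-- Nonnegativity of the k-th order conditional entropy estimator for a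
shift-invariant, fully supported distribution on `E^{k+1}`. -/
theorem stmt_15 [Fintype E] [DecidableEq E] (k : ℕ) (hk : 1 ≤ k)
    (P : (Fin (k + 1) → E) → ℝ)
    (hpos : ∀ γ, 0 < P γ) (hsum : ∑ γ, P γ = 1)
    (hshift : ∀ j m : ℕ, j + m ≤ k + 1 → window k P j m = window k P 0 m) :
    0 ≤ ∑ δ : Fin (k + 1) → E,
        P δ *
          Real.log
            ((P δ / window k P 0 k (seqInit k δ)) /
              (P (seqRev (k + 1) δ) / window k P 0 k (seqInit k (seqRev (k + 1) δ)))) := by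
  classical
  rcases isEmpty_or_nonempty E with hE | hE
  · haveI : IsEmpty (Fin (k + 1) → E) := ⟨fun f => hE.false (f 0)⟩
    rw [Finset.univ_eq_empty, Finset.sum_empty]
  set A : (Fin k → E) → ℝ := window k P 0 k with hA
  -- index normalizations
  have hidx0 : ∀ i : Fin k,
      (⟨(0 + (i : ℕ)) % (k + 1), Nat.mod_lt _ (Nat.succ_pos k)⟩ : Fin (k + 1)) = i.castSucc :=
    fun i => Fin.ext (by simp [Nat.mod_eq_of_lt (Nat.lt_succ_of_lt i.isLt)])
  have hidx1 : ∀ i : Fin k,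
      (⟨(1 + (i : ℕ)) % (k + 1), Nat.mod_lt _ (Nat.succ_pos k)⟩ : Fin (k + 1)) = i.succ :=
    fun i => Fin.ext (by simp [Nat.mod_eq_of_lt (by omega : 1 + (i : ℕ) < k + 1), Nat.add_comm])
  -- reindexing sums over (k+1)-tuples
  have sumSnoc : ∀ f : (Fin (k + 1) → E) → ℝ,
      ∑ γ, f γ = ∑ η : Fin k → E, ∑ x : E, f (Fin.snoc η x) := by
    intro f
    rw [← Equiv.sum_comp (Fin.snocEquiv (fun _ : Fin (k + 1) => E)) f, Fintype.sum_prod_type]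
    exact Finset.sum_comm
  have sumCons : ∀ f : (Fin (k + 1) → E) → ℝ,
      ∑ γ, f γ = ∑ η : Fin k → E, ∑ x : E, f (Fin.cons x η) := by
    intro f
    rw [← Equiv.sum_comp (Fin.consEquiv (fun _ : Fin (k + 1) => E)) f, Fintype.sum_prod_type]
    exact Finset.sum_comm
  -- window identities
  have winA : ∀ η : Fin k → E, A η = ∑ x : E, P (Fin.snoc η x) := by
    intro η
    rw [hA]
    unfold window
    simp only [hidx0]
    rw [sumSnoc (fun γ => if (∀ i : Fin k, γ i.castSucc = η i) then P γ else 0)]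
    simp only [Fin.snoc_castSucc, ← funext_iff]
    rw [Finset.sum_comm]
    simp
  have winB : ∀ η : Fin k → E, window k P 1 k η = ∑ x : E, P (Fin.cons x η) := by
    intro η
    unfold window
    simp only [hidx1]
    rw [sumCons (fun γ => if (∀ i : Fin k, γ i.succ = η i) then P γ else 0)]
    simp only [Fin.cons_succ, ← funext_iff]
    rw [Finset.sum_comm]
    simp
  have hW : window k P 1 k = A := hshift 1 k (by omega)
  have hApos : ∀ η, 0 < A η := fun η => by
    rw [winA η]
    exact Finset.sum_pos (fun x _ => hpos _) Finset.univ_nonempty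
  -- tuple identities
  have hinitsnoc : ∀ (η : Fin k → E) (x : E), seqInit k (Fin.snoc η x) = η := by
    intro η x; funext i; exact Fin.snoc_castSucc ..
  have hrevsnoc : ∀ (η : Fin k → E) (x : E),
      seqRev (k + 1) (Fin.snoc η x) = Fin.cons x (seqRev k η) := by
    intro η x
    funext i
    refine Fin.cases ?_ (fun j => ?_) i
    · simp [seqRev, Fin.rev_zero]
    · simp [seqRev, Fin.rev_succ]
  have hinitrev : ∀ δ : Fin (k + 1) → E,
      seqInit k (seqRev (k + 1) δ) = seqRev k (Fin.tail δ) := by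
    intro δ
    funext i
    show δ (Fin.rev i.castSucc) = δ (Fin.rev i).succ
    rw [Fin.rev_castSucc]
  -- pointwise rewriting of the summand
  have hpt : ∀ δ : Fin (k + 1) → E,
      P δ * Real.log ((P δ / A (seqInit k δ)) /
          (P (seqRev (k + 1) δ) / A (seqInit k (seqRev (k + 1) δ))))
        = P δ * Real.log (P δ / P (seqRev (k + 1) δ))
          + P δ * Real.log (A (seqRev k (Fin.tail δ)))
          - P δ * Real.log (A (seqInit k δ)) := by
    intro δ
    rw [hinitrev δ]
    have h1 : (0:ℝ) < P δ / A (seqInit k δ) := div_pos (hpos δ) (hApos _)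
    have h2 : (0:ℝ) < P (seqRev (k + 1) δ) / A (seqRev k (Fin.tail δ)) :=
      div_pos (hpos _) (hApos _)
    rw [Real.log_div h1.ne' h2.ne',
      Real.log_div (hpos δ).ne' (hApos (seqInit k δ)).ne',
      Real.log_div (hpos (seqRev (k + 1) δ)).ne' (hApos (seqRev k (Fin.tail δ))).ne',
      Real.log_div (hpos δ).ne' (hpos (seqRev (k + 1) δ)).ne']
    ring
  rw [Finset.sum_congr rfl (fun δ _ => hpt δ), Finset.sum_sub_distrib, Finset.sum_add_distrib]
  -- compute the three sums
  have hT2 : ∑ δ : Fin (k + 1) → E, P δ * Real.log (A (seqInit k δ))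
      = ∑ η : Fin k → E, A η * Real.log (A η) := by
    rw [sumSnoc (fun δ => P δ * Real.log (A (seqInit k δ)))]
    refine Finset.sum_congr rfl fun η _ => ?_
    simp only [hinitsnoc]
    rw [← Finset.sum_mul, ← winA]
  have hT3 : ∑ δ : Fin (k + 1) → E, P δ * Real.log (A (seqRev k (Fin.tail δ)))
      = ∑ η : Fin k → E, A η * Real.log (A (seqRev k η)) := by
    rw [sumCons (fun δ => P δ * Real.log (A (seqRev k (Fin.tail δ))))]
    refine Finset.sum_congr rfl fun η _ => ?_
    simp only [Fin.tail_cons]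
    rw [← Finset.sum_mul, ← winB, hW]
  have hT1 : ∑ δ : Fin (k + 1) → E, P δ * Real.log (P δ / P (seqRev (k + 1) δ))
      = ∑ η : Fin k → E, ∑ x : E,
          P (Fin.snoc η x) * Real.log (P (Fin.snoc η x) / P (Fin.cons x (seqRev k η))) := by
    rw [sumSnoc (fun δ => P δ * Real.log (P δ / P (seqRev (k + 1) δ)))]
    refine Finset.sum_congr rfl fun η _ => Finset.sum_congr rfl fun x _ => ?_
    rw [hrevsnoc]
  rw [hT1, hT2, hT3, ← Finset.sum_add_distrib, ← Finset.sum_sub_distrib]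
  refine Finset.sum_nonneg fun η _ => ?_
  have hls := logSumIneq (fun x : E => P (Fin.snoc η x)) (fun x : E => P (Fin.cons x (seqRev k η)))
    (fun x => hpos _) (fun x => hpos _)
  rw [← winA η] at hls
  have hq : ∑ x : E, P (Fin.cons x (seqRev k η)) = A (seqRev k η) := by
    rw [← winB, hW]
  rw [hq] at hls
  rw [Real.log_div (hApos η).ne' (hApos (seqRev k η)).ne'] at hls
  nlinarith [hls]
end
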